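/- Let k⁻ be a strike such that d2(k⁻, I) = 0 for some I > 0 (zero vanna condition). Then k⁻ = x - I²(T-t)/2, and evaluating H := (∂³/∂x³ - ∂²/∂x²)BS at strike k⁻ and volatility v > 0 yields H(t,T,x,k⁻,v) = [e^x N'(d1(k⁻,v)) / (2v√(T-t))] · (v² - I²)/v². -/

import Mathlib

open MeasureTheory Real Filter

/-- Standard normal density N'. -/
noncomputable def normPdf (z : ℝ) : ℝ := Real.exp (-z ^ 2 / 2) / Real.sqrt (2 * Real.pi)

/-- Standard normal CDF N. -/
noncomputable def normCdf (z : ℝ) : ℝ := ∫ u in Set.Iic z, normPdf u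

/-- Black-Scholes d1. -/
noncomputable def bsD1 (t T x k σ : ℝ) : ℝ :=
  (x - k) / (σ * Real.sqrt (T - t)) + σ / 2 * Real.sqrt (T - t)

/-- Black-Scholes d2. -/
noncomputable def bsD2 (t T x k σ : ℝ) : ℝ :=
  (x - k) / (σ * Real.sqrt (T - t)) - σ / 2 * Real.sqrt (T - t)

/-- Zero-rate Black-Scholes call price. -/
noncomputable def bsPrice (t T x k σ : ℝ) : ℝ :=
  Real.exp x * normCdf (bsD1 t T x k σ) - Real.exp k * normCdf (bsD2 t T x k σ)

/-- The operator H = (∂³/∂x³ - ∂²/∂x²) applied to the Black-Scholes price, as a function of x. -/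
noncomputable def bsH (t T k σ : ℝ) (x : ℝ) : ℝ :=
  iteratedDeriv 3 (fun y => bsPrice t T y k σ) x -
    iteratedDeriv 2 (fun y => bsPrice t T y k σ) x

lemma normPdf_integrable : MeasureTheory.Integrable normPdf := by
  have h : normPdf = fun z => (Real.sqrt (2 * Real.pi))⁻¹ * Real.exp (-(1/2) * z ^ 2) := by
    funext z
    rw [normPdf, div_eq_inv_mul]
    ring_nf
  rw [h]
  exact ((integrable_exp_neg_mul_sq (by norm_num : (0:ℝ) < 1/2)).const_mul _)

lemma normPdf_continuous : Continuous normPdf := by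
  unfold normPdf; continuity

lemma hasDerivAt_normCdf (z : ℝ) : HasDerivAt normCdf (normPdf z) z := by
  have hint := normPdf_integrable
  have key : normCdf = fun w => normCdf 0 + ∫ u in (0:ℝ)..w, normPdf u := by
    funext w
    rw [← intervalIntegral.integral_Iic_sub_Iic hint.integrableOn hint.integrableOn]
    simp [normCdf]
  rw [key]
  exact (intervalIntegral.integral_hasDerivAt_right (hint.intervalIntegrable)
    hint.aestronglyMeasurable.stronglyMeasurableAtFilter
    normPdf_continuous.continuousAt).const_add _

lemma hasDerivAt_normPdf (z : ℝ) : HasDerivAt normPdf (-z * normPdf z) z := by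
  have h : HasDerivAt (fun w : ℝ => -w ^ 2 / 2) (-z) z := by
    have := ((hasDerivAt_pow 2 z).neg).div_const 2
    refine this.congr_deriv (Eq.symm ?_); push_cast; ring
  have := (h.exp).div_const (Real.sqrt (2 * Real.pi))
  refine this.congr_deriv (Eq.symm ?_)
  unfold normPdf; ring

lemma key_id (t T k v : ℝ) (hs : 0 < Real.sqrt (T - t)) (hv : 0 < v) (x : ℝ) :
    Real.exp k * normPdf (bsD2 t T x k v) = Real.exp x * normPdf (bsD1 t T x k v) := by
  unfold normPdf bsD1 bsD2
  rw [mul_div_assoc', mul_div_assoc', ← Real.exp_add, ← Real.exp_add]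
  congr 1
  have h : v * Real.sqrt (T - t) ≠ 0 := by positivity
  field_simp
  ring

lemma hD1 (t T k v : ℝ) (y : ℝ) :
    HasDerivAt (fun y => bsD1 t T y k v) (1 / (v * Real.sqrt (T - t))) y := by
  unfold bsD1
  exact (((hasDerivAt_id y).sub_const k).div_const _).add_const _

lemma hD2 (t T k v : ℝ) (y : ℝ) :
    HasDerivAt (fun y => bsD2 t T y k v) (1 / (v * Real.sqrt (T - t))) y := by
  unfold bsD2
  exact (((hasDerivAt_id y).sub_const k).div_const _).sub_const _

lemma priceDeriv1 (t T k v : ℝ) (hs : 0 < Real.sqrt (T - t)) (hv : 0 < v) (y : ℝ) :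
    HasDerivAt (fun y => bsPrice t T y k v) (Real.exp y * normCdf (bsD1 t T y k v)) y := by
  have h1 : HasDerivAt (fun y => normCdf (bsD1 t T y k v))
      (normPdf (bsD1 t T y k v) * (1 / (v * Real.sqrt (T - t)))) y :=
    (hasDerivAt_normCdf _).comp y (hD1 t T k v y)
  have h2 : HasDerivAt (fun y => normCdf (bsD2 t T y k v))
      (normPdf (bsD2 t T y k v) * (1 / (v * Real.sqrt (T - t)))) y :=
    (hasDerivAt_normCdf _).comp y (hD2 t T k v y)
  have h := ((Real.hasDerivAt_exp y).mul h1).sub (h2.const_mul (Real.exp k))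
  refine h.congr_deriv (Eq.symm ?_)
  have hid := key_id t T k v hs hv y
  linear_combination (1 / (v * Real.sqrt (T - t))) * hid

lemma priceDeriv2 (t T k v : ℝ) (y : ℝ) :
    HasDerivAt (fun y => Real.exp y * normCdf (bsD1 t T y k v))
      (Real.exp y * normCdf (bsD1 t T y k v)
        + Real.exp y * normPdf (bsD1 t T y k v) / (v * Real.sqrt (T - t))) y := by
  have h1 : HasDerivAt (fun y => normCdf (bsD1 t T y k v))
      (normPdf (bsD1 t T y k v) * (1 / (v * Real.sqrt (T - t)))) y :=
    (hasDerivAt_normCdf _).comp y (hD1 t T k v y)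
  have h := (Real.hasDerivAt_exp y).mul h1
  refine h.congr_deriv (Eq.symm ?_)
  ring

lemma priceDeriv3 (t T k v : ℝ) (y : ℝ) :
    HasDerivAt (fun y => Real.exp y * normCdf (bsD1 t T y k v)
        + Real.exp y * normPdf (bsD1 t T y k v) / (v * Real.sqrt (T - t)))
      (Real.exp y * normCdf (bsD1 t T y k v)
        + 2 * (Real.exp y * normPdf (bsD1 t T y k v) / (v * Real.sqrt (T - t)))
        - Real.exp y * bsD1 t T y k v * normPdf (bsD1 t T y k v)
            / (v * Real.sqrt (T - t)) ^ 2) y := by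
  have h1 : HasDerivAt (fun y => normPdf (bsD1 t T y k v))
      ((-(bsD1 t T y k v) * normPdf (bsD1 t T y k v)) * (1 / (v * Real.sqrt (T - t)))) y :=
    (hasDerivAt_normPdf _).comp y (hD1 t T k v y)
  have h := (priceDeriv2 t T k v y).add
    (((Real.hasDerivAt_exp y).mul h1).div_const (v * Real.sqrt (T - t)))
  refine h.congr_deriv (Eq.symm ?_)
  field_simp
  ring

/-- At the zero vanna strike k⁻ (d2(k⁻,I)=0): k⁻ = x - I²(T-t)/2 and
H(t,T,x,k⁻,v) = [eˣ N'(d1(k⁻,v))/(2v√(T-t))] (v² - I²)/v². -/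
theorem bs_H_zero_vanna (t T x k I v : ℝ) (ht : t < T) (hI : 0 < I) (hv : 0 < v)
    (hk : bsD2 t T x k I = 0) :
    k = x - I ^ 2 * (T - t) / 2 ∧
    bsH t T k v x
      = Real.exp x * normPdf (bsD1 t T x k v) / (2 * v * Real.sqrt (T - t)) *
          ((v ^ 2 - I ^ 2) / v ^ 2) := by
  have hτ : (0:ℝ) < T - t := sub_pos.mpr ht
  have hs : 0 < Real.sqrt (T - t) := Real.sqrt_pos.mpr hτ
  have hs2 : Real.sqrt (T - t) ^ 2 = T - t := Real.sq_sqrt hτ.le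
  have hIs : I * Real.sqrt (T - t) ≠ 0 := by positivity
  unfold bsD2 at hk
  have hkx : k = x - I ^ 2 * (T - t) / 2 := by
    rw [sub_eq_zero, div_eq_iff hIs] at hk
    nlinarith [hk, hs2]
  refine ⟨hkx, ?_⟩
  have e1 : deriv (fun y => bsPrice t T y k v) = fun y => Real.exp y * normCdf (bsD1 t T y k v) :=
    funext fun y => (priceDeriv1 t T k v hs hv y).deriv
  have e2 : deriv (deriv (fun y => bsPrice t T y k v)) = fun y =>
      Real.exp y * normCdf (bsD1 t T y k v)
        + Real.exp y * normPdf (bsD1 t T y k v) / (v * Real.sqrt (T - t)) := by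
    rw [e1]; exact funext fun y => (priceDeriv2 t T k v y).deriv
  have h2 : iteratedDeriv 2 (fun y => bsPrice t T y k v) x =
      Real.exp x * normCdf (bsD1 t T x k v)
        + Real.exp x * normPdf (bsD1 t T x k v) / (v * Real.sqrt (T - t)) := by
    rw [iteratedDeriv_succ, iteratedDeriv_one, e2]
  have h3 : iteratedDeriv 3 (fun y => bsPrice t T y k v) x =
      Real.exp x * normCdf (bsD1 t T x k v)
        + 2 * (Real.exp x * normPdf (bsD1 t T x k v) / (v * Real.sqrt (T - t)))
        - Real.exp x * bsD1 t T x k v * normPdf (bsD1 t T x k v)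
            / (v * Real.sqrt (T - t)) ^ 2 := by
    rw [show (3:ℕ) = 2 + 1 from rfl, iteratedDeriv_succ, iteratedDeriv_succ, iteratedDeriv_one,
      e2]
    exact (priceDeriv3 t T k v x).deriv
  unfold bsH
  rw [h2, h3]
  set s : ℝ := Real.sqrt (T - t) with hsdef
  have hd : bsD1 t T x k v = I ^ 2 * s / (2 * v) + v / 2 * s := by
    unfold bsD1
    rw [hkx, ← hsdef, ← hs2]
    field_simp
    ring
  rw [hd]
  set P := normPdf (I ^ 2 * s / (2 * v) + v / 2 * s)
  field_simp
  ring
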